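/- Let N be a positive integer, v := exp(πi/N), m an integer, and j, l integers with 1 ≤ j ≤ N−1 and 0 ≤ l ≤ N−1. Then: (a) if l < min(j, N−j), then D_m(j,l) = ( mj/2 + (v^j + v^{−j})/{j} + 2{2j}·∑_{k=1}^l 1/A(j,k) ) · S(j−l, j+l); (b) if j ≤ l < N−j, then D_m(j,l) = 2·S'(j−l, j+l); (c) if N−j ≤ l < j, then D_m(j,l) = −2·S'(j−l, j+l); (d) if l ≥ max(j, N−j), then D_m(j,l) = 0. -/

import Mathlib

open Complex

/-- `v = exp(πi/N)`. -/
noncomputable def vN (N : ℕ) : ℂ := Complex.exp (Real.pi * Complex.I / N)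

/-- `{n} = v^n - v^{-n}` at `v = exp(πi/N)`. -/
noncomputable def br (N : ℕ) (n : ℤ) : ℂ := vN N ^ n - vN N ^ (-n)

/-- `A(j,k) = {j-k}{j+k}`. -/
noncomputable def AA (N : ℕ) (j k : ℤ) : ℂ := br N (j - k) * br N (j + k)

/-- `D_m(j,l)` from the context. -/
noncomputable def DD (N : ℕ) (m j : ℤ) (l : ℕ) : ℂ :=
  (vN N ^ j + vN N ^ (-j)) *
      ((∏ k ∈ Finset.Icc 1 l, AA N j (k : ℤ)) +
        2 * (br N j) ^ 2 *
          ∑ k ∈ Finset.Icc 1 l, ∏ k' ∈ (Finset.Icc 1 l).erase k, AA N j (k' : ℤ)) +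
    ((m : ℂ) * (j : ℂ) / 2) * br N j * ∏ k ∈ Finset.Icc 1 l, AA N j (k : ℤ)


/-- `S(k,l) = ∏_{k ≤ r ≤ l} {r}`. -/
noncomputable def SS (N : ℕ) (k l : ℤ) : ℂ := ∏ r ∈ Finset.Icc k l, br N r

/-- `S'(k,l) = ∏_{k ≤ r ≤ l, r ∉ {0,N}} {r}`. -/
noncomputable def SS' (N : ℕ) (k l : ℤ) : ℂ :=
  ∏ r ∈ (Finset.Icc k l).filter (fun r => r ≠ 0 ∧ r ≠ (N : ℤ)), br N r

/-!
Write `c = v^j + v^{-j}`. Pairing the factors of `S(j-l, j+l)` symmetrically about `j` gives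
`S(j-l, j+l) = {j} ∏_{k ≤ l} A(j,k)`, and `{2j} = c{j}`. Since `v` is a primitive `2N`-th root
of unity, `{n} = 0` exactly when `N ∣ n`. In case (a) no `A(j,k)` vanishes, and dividing the sum by
`∏ A(j,k)` gives the formula. Otherwise `A(j,k₀) = 0` for `k₀ = j` or `k₀ = N - j` in `[1, l]`:
then `∏ A(j,k) = 0`, the sum collapses to the single product omitting `k₀`, and
`D_m(j,l) = 2{2j}{j} ∏_{k ≠ k₀} A(j,k)`. In (b) and (c) this is `±2S'(j-l, j+l)`, the factor
`{0}` resp. `{N}` being the one skipped by `S'` (and `{2j - N} = -{2j}`); in (d) it vanishes, as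
either `{2j} = {N} = 0` or `N - j` is a second zero of `A(j, ·)`.
-/

open Finset

lemma Finset.prod_Icc_sub_add {M : Type*} [CommMonoid M] (f : ℤ → M) (j : ℤ) (l : ℕ) :
    ∏ r ∈ Icc (j - l) (j + l), f r = f j * ∏ k ∈ Icc 1 l, f (j - k) * f (j + k) := by
  induction l with
  | zero => simp
  | succ l ih =>
    have hIcc : Icc (j - (l + 1 : ℕ)) (j + (l + 1 : ℕ))
        = insert (j - (l + 1 : ℕ)) (insert (j + (l + 1 : ℕ)) (Icc (j - l) (j + l))) := by
      ext; simp only [mem_Icc, mem_insert]; omega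
    rw [hIcc, prod_insert (by simp only [mem_Icc, mem_insert]; omega),
      prod_insert (by simp only [mem_Icc]; omega), ih, prod_Icc_succ_top (by omega)]
    ac_rfl

lemma Finset.sum_prod_erase_of_eq_zero {ι R : Type*} [DecidableEq ι] [CommSemiring R]
    {s : Finset ι} {f : ι → R} {a : ι} (ha : a ∈ s) (hfa : f a = 0) :
    ∑ k ∈ s, ∏ i ∈ s.erase k, f i = ∏ i ∈ s.erase a, f i :=
  sum_eq_single_of_mem a ha fun _ _ hka => prod_eq_zero (mem_erase.2 ⟨hka.symm, ha⟩) hfa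

lemma Finset.sum_prod_erase_eq_prod_mul_sum_one_div {ι K : Type*} [DecidableEq ι] [Field K]
    {s : Finset ι} {f : ι → K} (hf : ∀ k ∈ s, f k ≠ 0) :
    ∑ k ∈ s, ∏ i ∈ s.erase k, f i = (∏ i ∈ s, f i) * ∑ k ∈ s, 1 / f k := by
  rw [mul_sum]
  refine sum_congr rfl fun k hk => ?_
  rw [← prod_erase_mul s f hk, mul_assoc, mul_one_div_cancel (hf k hk), mul_one]

section Bracket

variable {N : ℕ}

lemma vN_ne_zero (N : ℕ) : vN N ≠ 0 := exp_ne_zero _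

lemma vN_isPrimitiveRoot (hN : N ≠ 0) : IsPrimitiveRoot (vN N) (2 * N) := by
  convert isPrimitiveRoot_exp (2 * N) (by positivity) using 2
  rw [vN]
  push_cast
  field_simp

lemma vN_zpow_natCast_self (hN : N ≠ 0) : vN N ^ (N : ℤ) = -1 := by
  rw [vN, ← exp_int_mul, ← exp_pi_mul_I]
  push_cast
  field_simp

lemma br_eq_zero_iff (hN : N ≠ 0) (n : ℤ) : br N n = 0 ↔ (N : ℤ) ∣ n := by
  have hv := vN_ne_zero N
  rw [br, sub_eq_zero, ← mul_inv_eq_one₀ (zpow_ne_zero _ hv), ← zpow_neg, ← zpow_add₀ hv,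
    (vN_isPrimitiveRoot hN).zpow_eq_one_iff_dvd, neg_neg, ← two_mul]
  push_cast
  exact mul_dvd_mul_iff_left two_ne_zero

lemma br_zero : br N 0 = 0 := by simp [br]

lemma br_natCast_self (hN : N ≠ 0) : br N N = 0 := (br_eq_zero_iff hN _).2 dvd_rfl

lemma br_sub_natCast_self (hN : N ≠ 0) (n : ℤ) : br N (n - N) = -br N n := by
  have hv := vN_ne_zero N
  rw [br, br, neg_sub, zpow_sub₀ hv, zpow_sub₀ hv, vN_zpow_natCast_self hN, zpow_neg]
  field_simp
  ring

lemma br_two_mul (j : ℤ) : br N (2 * j) = (vN N ^ j + vN N ^ (-j)) * br N j := by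
  have hv := vN_ne_zero N
  rw [br, br, two_mul, zpow_add₀ hv, neg_add, zpow_add₀ hv]
  ring

lemma br_ne_zero_of_pos_of_lt {n : ℤ} (h0 : 0 < n) (hn : n < N) : br N n ≠ 0 := fun h =>
  h0.ne' (Int.eq_zero_of_dvd_of_nonneg_of_lt h0.le hn ((br_eq_zero_iff (by omega) n).1 h))

lemma AA_self (j : ℤ) : AA N j j = 0 := by
  rw [AA, sub_self, br_zero, zero_mul]

lemma AA_natCast_sub {j : ℕ} (hjN : j < N) : AA N j (N - j : ℕ) = 0 := by
  rw [AA, Nat.cast_sub hjN.le, add_sub_cancel, br_natCast_self (by omega), mul_zero]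

end Bracket

section CaseAnalysis

variable {N : ℕ} (m : ℤ)

lemma SS_sub_add (j : ℤ) (l : ℕ) :
    SS N (j - l) (j + l) = br N j * ∏ k ∈ Icc 1 l, AA N j k :=
  prod_Icc_sub_add _ j l

lemma DD_eq_of_forall_ne_zero {j : ℤ} {l : ℕ} (hj : br N j ≠ 0)
    (hA : ∀ k ∈ Icc 1 l, AA N j k ≠ 0) :
    DD N m j l = ((m : ℂ) * j / 2 + (vN N ^ j + vN N ^ (-j)) / br N j +
        2 * br N (2 * j) * ∑ k ∈ Icc 1 l, 1 / AA N j k) * SS N (j - l) (j + l) := by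
  rw [DD, sum_prod_erase_eq_prod_mul_sum_one_div hA, SS_sub_add, br_two_mul]
  field_simp
  ring

lemma DD_eq_of_AA_eq_zero {j : ℤ} {l k₀ : ℕ} (hk₀ : k₀ ∈ Icc 1 l) (hA : AA N j k₀ = 0) :
    DD N m j l = 2 * br N (2 * j) * br N j * ∏ k ∈ (Icc 1 l).erase k₀, AA N j k := by
  rw [DD, prod_eq_zero hk₀ hA, sum_prod_erase_of_eq_zero hk₀ hA, br_two_mul]
  ring

lemma SS'_sub_add {j : ℤ} {l k₀ : ℕ} (hk₀ : k₀ ∈ Icc 1 l)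
    (hadm : ∀ r ∈ Icc (j - l) (j + l), r ≠ j - k₀ → r ≠ j + k₀ → r ≠ 0 ∧ r ≠ (N : ℤ)) :
    SS' N (j - l) (j + l) =
      (∏ r ∈ ({j - k₀, j + k₀} : Finset ℤ).filter (fun r => r ≠ 0 ∧ r ≠ (N : ℤ)), br N r) *
        br N j * ∏ k ∈ (Icc 1 l).erase k₀, AA N j k := by
  have hk₀' := mem_Icc.1 hk₀
  have hadm' (r : ℤ) (hr : j - l ≤ r ∧ r ≤ j + l) (h₁ : r ≠ j - k₀) (h₂ : r ≠ j + k₀) :=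
    hadm r (mem_Icc.2 hr) h₁ h₂
  rw [SS', prod_filter, prod_filter, prod_Icc_sub_add, ← mul_prod_erase _ _ hk₀,
    prod_pair (by omega), if_pos (hadm' j (by omega) (by omega) (by omega))]
  rw [prod_congr rfl fun k hk => ?_]
  · ring
  · obtain ⟨hkk₀, hk⟩ := mem_erase.1 hk
    rw [mem_Icc] at hk
    rw [if_pos (hadm' _ (by omega) (by omega) (by omega)),
      if_pos (hadm' _ (by omega) (by omega) (by omega)), AA]

variable {j l : ℕ}

lemma DD_eq_mul_SS (hj : 0 < j) (hlj : l < j) (hlN : j + l < N) :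
    DD N m j l = ((m : ℂ) * j / 2 + (vN N ^ (j : ℤ) + vN N ^ (-(j : ℤ))) / br N j +
        2 * br N (2 * j) * ∑ k ∈ Icc 1 l, 1 / AA N j k) * SS N (j - l) (j + l) := by
  refine DD_eq_of_forall_ne_zero m (br_ne_zero_of_pos_of_lt (by omega) (by omega))
    fun k hk => ?_
  rw [mem_Icc] at hk
  exact mul_ne_zero (br_ne_zero_of_pos_of_lt (by omega) (by omega))
    (br_ne_zero_of_pos_of_lt (by omega) (by omega))

lemma DD_eq_two_mul_SS' (hj : 0 < j) (hjl : j ≤ l) (hlN : j + l < N) :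
    DD N m j l = 2 * SS' N (j - l) (j + l) := by
  have hk₀ : j ∈ Icc 1 l := mem_Icc.2 ⟨hj, hjl⟩
  have hpair : ({(j : ℤ) - j, (j : ℤ) + j} : Finset ℤ).filter (fun r => r ≠ 0 ∧ r ≠ (N : ℤ))
      = {2 * (j : ℤ)} := by
    ext; simp only [mem_filter, mem_insert, mem_singleton]; omega
  rw [DD_eq_of_AA_eq_zero m hk₀ (AA_self _),
    SS'_sub_add hk₀ fun r hr _ _ => by rw [mem_Icc] at hr; omega, hpair, prod_singleton]
  ring

lemma DD_eq_neg_two_mul_SS' (hjN : j < N) (hl : N ≤ j + l) (hlj : l < j) :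
    DD N m j l = -2 * SS' N (j - l) (j + l) := by
  have hk₀ : N - j ∈ Icc 1 l := mem_Icc.2 ⟨by omega, by omega⟩
  have hpair : ({(j : ℤ) - (N - j : ℕ), (j : ℤ) + (N - j : ℕ)} : Finset ℤ).filter
      (fun r => r ≠ 0 ∧ r ≠ (N : ℤ)) = {2 * (j : ℤ) - N} := by
    ext; simp only [mem_filter, mem_insert, mem_singleton]; omega
  rw [DD_eq_of_AA_eq_zero m hk₀ (AA_natCast_sub hjN),
    SS'_sub_add hk₀ fun r hr _ _ => by rw [mem_Icc] at hr; omega, hpair, prod_singleton,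
    br_sub_natCast_self (by omega)]
  ring

lemma DD_eq_zero (hj : 0 < j) (hjN : j < N) (hjl : j ≤ l) (hl : N ≤ j + l) :
    DD N m j l = 0 := by
  have hk₀ : j ∈ Icc 1 l := mem_Icc.2 ⟨hj, hjl⟩
  rw [DD_eq_of_AA_eq_zero m hk₀ (AA_self _)]
  rcases eq_or_ne (2 * j) N with h2j | h2j
  · rw [show 2 * (j : ℤ) = N by omega, br_natCast_self (by omega)]
    ring
  · have hk₁ : N - j ∈ (Icc 1 l).erase j :=
      mem_erase.2 ⟨by omega, mem_Icc.2 ⟨by omega, by omega⟩⟩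
    rw [prod_eq_zero hk₁ (AA_natCast_sub hjN)]
    ring

end CaseAnalysis

theorem D_cases_general (N : ℕ) (m : ℤ) (j l : ℕ)
    (hj1 : 1 ≤ j) (hj2 : j ≤ N - 1) :
    (l < min j (N - j) →
      DD N m (j : ℤ) l =
        ((m : ℂ) * (j : ℂ) / 2 + (vN N ^ (j : ℤ) + vN N ^ (-(j : ℤ))) / br N (j : ℤ) +
            2 * br N (2 * (j : ℤ)) * ∑ k ∈ Finset.Icc 1 l, 1 / AA N (j : ℤ) (k : ℤ)) *
          SS N ((j : ℤ) - (l : ℤ)) ((j : ℤ) + (l : ℤ))) ∧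
    (j ≤ l ∧ l < N - j →
      DD N m (j : ℤ) l = 2 * SS' N ((j : ℤ) - (l : ℤ)) ((j : ℤ) + (l : ℤ))) ∧
    (N - j ≤ l ∧ l < j →
      DD N m (j : ℤ) l = -2 * SS' N ((j : ℤ) - (l : ℤ)) ((j : ℤ) + (l : ℤ))) ∧
    (max j (N - j) ≤ l → DD N m (j : ℤ) l = 0) := by
  refine ⟨fun h => ?_, fun h => ?_, fun h => ?_, fun h => ?_⟩
  · exact DD_eq_mul_SS m (by omega) (by omega) (by omega)
  · exact DD_eq_two_mul_SS' m (by omega) h.1 (by omega)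
  · exact DD_eq_neg_two_mul_SS' m (by omega) (by omega) h.2
  · exact DD_eq_zero m (by omega) (by omega) (by omega) (by omega)

/-- The case analysis for `D_m(j,l)` (Lemma 3 of the paper):
(a) if `l < min(j, N-j)` then `D_m(j,l) = (mj/2 + (v^j+v^{-j})/{j} + 2{2j}∑ 1/A(j,k))·S(j-l,j+l)`;
(b) if `j ≤ l < N-j` then `D_m(j,l) = 2 S'(j-l,j+l)`;
(c) if `N-j ≤ l < j` then `D_m(j,l) = -2 S'(j-l,j+l)`;
(d) if `l ≥ max(j, N-j)` then `D_m(j,l) = 0`. -/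
theorem D_cases (N : ℕ) (hN : 0 < N) (m : ℤ) (j l : ℕ)
    (hj1 : 1 ≤ j) (hj2 : j ≤ N - 1) (hl : l ≤ N - 1) :
    (l < min j (N - j) →
      DD N m (j : ℤ) l =
        ((m : ℂ) * (j : ℂ) / 2 + (vN N ^ (j : ℤ) + vN N ^ (-(j : ℤ))) / br N (j : ℤ) +
            2 * br N (2 * (j : ℤ)) * ∑ k ∈ Finset.Icc 1 l, 1 / AA N (j : ℤ) (k : ℤ)) *
          SS N ((j : ℤ) - (l : ℤ)) ((j : ℤ) + (l : ℤ))) ∧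
    (j ≤ l ∧ l < N - j →
      DD N m (j : ℤ) l = 2 * SS' N ((j : ℤ) - (l : ℤ)) ((j : ℤ) + (l : ℤ))) ∧
    (N - j ≤ l ∧ l < j →
      DD N m (j : ℤ) l = -2 * SS' N ((j : ℤ) - (l : ℤ)) ((j : ℤ) + (l : ℤ))) ∧
    (max j (N - j) ≤ l → DD N m (j : ℤ) l = 0) :=
  D_cases_general N m j l hj1 hj2
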